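/- Over {a<b<c}, suppose w = b^α a b^β c b^γ a b^δ c b^ν and w' = b^{α'} a b^{β'} c b^{γ'} a b^{δ'} c b^{ν'} (with β,γ,δ,β',γ',δ' ≥ 1 and α,ν,α',ν' ≥ 0) are distinct and M-equivalent. Then γ = γ', α + ν = α' + ν', β' − β = δ − δ', and α' − α = ν − ν'. Moreover the Hamming distance between w and w' is 7 or 8. -/

import Mathlib

/-!
Splitting a word at a cut shows that the counts of `b`, `ab`, `bc`, `abc` in
`b^α a b^β c b^γ a b^δ c b^ν` are `α+β+γ+δ+ν`, `β+γ+2δ+2ν`, `2α+2β+γ+δ` and `2β+γ+2δ`.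
The exponent differences of two M-equivalent words of this shape lie in the common kernel of
these forms, the line spanned by `(1, -2, 0, 2, -1)`: with `t = α' - α` we get `β' = β - 2t`,
`γ' = γ`, `δ' = δ + 2t`, `ν' = ν - t`.
For `t > 0` the letters `a, c, a, c` of the two words occupy eight distinct positions, except
when `t = γ + 1`, where the first `c` of one word sits on the second `a` of the other.
-/

open List

/-- Number of occurrences of `v` as a scattered subsequence of `w`. -/
def scount {α : Type*} [DecidableEq α] (w v : List α) : ℕ := w.sublists.count v

/-- The ternary ordered alphabet {a < b < c}. -/
inductive ABC | a | b | c
deriving DecidableEq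

open ABC

/-- M-equivalence over the ordered alphabet {a < b < c}. -/
def MEq3 (w w' : List ABC) : Prop :=
  scount w [a] = scount w' [a] ∧ scount w [b] = scount w' [b] ∧
  scount w [c] = scount w' [c] ∧ scount w [a, b] = scount w' [a, b] ∧
  scount w [b, c] = scount w' [b, c] ∧ scount w [a, b, c] = scount w' [a, b, c]

/-- Projection onto {a, c}: erase all b's. -/
def projAC (w : List ABC) : List ABC := w.filter (· ≠ b)

abbrev A (k : ℕ) : List ABC := List.replicate k a
abbrev B (k : ℕ) : List ABC := List.replicate k b
abbrev C (k : ℕ) : List ABC := List.replicate k c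

/-- Hamming distance between two (equal-length) words. -/
def dH {α : Type*} [DecidableEq α] (w w' : List α) : ℕ :=
  (w.zip w').countP fun p => p.1 ≠ p.2

section Subsequences
variable {α : Type*} [DecidableEq α]

lemma scount_eq_count_sublists' (w v : List α) : scount w v = w.sublists'.count v :=
  (sublists_perm_sublists' w).count_eq v

lemma scount_eq_zero_iff {w v : List α} : scount w v = 0 ↔ ¬v <+ w := by
  rw [scount_eq_count_sublists', count_eq_zero, mem_sublists']

lemma scount_nil_left {v : List α} (hv : v ≠ []) : scount [] v = 0 :=
  scount_eq_zero_iff.2 fun h => hv (sublist_nil.1 h)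

lemma scount_cons (x : α) (w v : List α) :
    scount (x :: w) v = scount w v + (w.sublists'.map (cons x)).count v := by
  rw [scount_eq_count_sublists', sublists'_cons, count_append, scount_eq_count_sublists']

@[simp]
lemma scount_nil_right (w : List α) : scount w [] = 1 := by
  induction w with
  | nil => rfl
  | cons x w ih => rw [scount_cons, ih, count_eq_zero.2 (by simp)]

lemma scount_cons_cons (x : α) (w : List α) (y : α) (v : List α) :
    scount (x :: w) (y :: v) = scount w (y :: v) + if y = x then scount w v else 0 := by
  rw [scount_cons]
  split_ifs with h
  · rw [h, count_map_of_injective _ _ cons_injective, scount_eq_count_sublists',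
      scount_eq_count_sublists']
  · rw [count_eq_zero.2 (by simp [Ne.symm h])]

theorem scount_append (u w v : List α) :
    scount (u ++ w) v =
      ∑ i ∈ Finset.range (v.length + 1), scount u (v.take i) * scount w (v.drop i) := by
  induction u generalizing v with
  | nil =>
    rw [Finset.sum_range_succ', Finset.sum_eq_zero, zero_add]
    · simp
    intro i hi
    have : i < v.length := Finset.mem_range.1 hi
    rw [scount_nil_left (ne_nil_of_length_pos (by simp; omega)), zero_mul]
  | cons x u ih =>
    cases v with
    | nil => simp
    | cons y v =>
      rw [cons_append, scount_cons_cons, ih, ih, length_cons,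
        Finset.sum_range_succ' _ (v.length + 1), Finset.sum_range_succ' _ (v.length + 1)]
      simp only [take_succ_cons, drop_succ_cons, take_zero, drop_zero, scount_nil_right,
        scount_cons_cons, add_mul, Finset.sum_add_distrib]
      split_ifs
      · ring
      · simp

lemma scount_singleton (w : List α) (x : α) : scount w [x] = w.count x := by
  induction w with
  | nil => rfl
  | cons y w ih =>
    rw [scount_cons_cons, ih, scount_nil_right, count_cons]
    simp only [beq_iff_eq, @eq_comm _ y x]

lemma scount_replicate_of_exists_ne {k : ℕ} {x : α} {v : List α} (h : ∃ y ∈ v, y ≠ x) :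
    scount (replicate k x) v = 0 := by
  rw [scount_eq_zero_iff, sublist_replicate_iff]
  rintro ⟨n, -, rfl⟩
  obtain ⟨y, hy, hne⟩ := h
  exact hne (eq_of_mem_replicate hy)

lemma scount_append_pair (u w : List α) (x y : α) :
    scount (u ++ w) [x, y] = scount u [x, y] + scount u [x] * scount w [y] + scount w [x, y] := by
  simp only [scount_append, length_cons, length_nil, Nat.reduceAdd, Finset.sum_range_succ,
    Finset.range_one, Finset.sum_singleton, take_zero, drop_zero, take_succ_cons, drop_succ_cons,
    take_nil, drop_nil, scount_nil_right, one_mul, mul_one]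
  ring

lemma scount_append_triple (u w : List α) (x y z : α) :
    scount (u ++ w) [x, y, z] = scount u [x, y, z] + scount u [x, y] * scount w [z] +
      scount u [x] * scount w [y, z] + scount w [x, y, z] := by
  simp only [scount_append, length_cons, length_nil, Nat.reduceAdd, Finset.sum_range_succ,
    Finset.range_one, Finset.sum_singleton, take_zero, drop_zero, take_succ_cons, drop_succ_cons,
    take_nil, drop_nil, scount_nil_right, one_mul, mul_one]
  ring

end Subsequences

def acacWord (α β γ δ ν : ℕ) : List ABC :=
  B α ++ [a] ++ B β ++ [c] ++ B γ ++ [a] ++ B δ ++ [c] ++ B ν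

lemma scount_acacWord (α β γ δ ν : ℕ) :
    scount (acacWord α β γ δ ν) [b] = α + β + γ + δ + ν ∧
    scount (acacWord α β γ δ ν) [a, b] = β + γ + 2 * δ + 2 * ν ∧
    scount (acacWord α β γ δ ν) [b, c] = 2 * α + 2 * β + γ + δ ∧
    scount (acacWord α β γ δ ν) [a, b, c] = 2 * β + γ + 2 * δ := by
  refine ⟨?_, ?_, ?_, ?_⟩ <;>
  · simp only [acacWord, append_assoc, scount_append_pair, scount_append_triple, scount_singleton,
      scount_cons_cons]
    simp [count_replicate, scount_replicate_of_exists_ne, scount_nil_left, two_mul, mul_two, add_comm,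
      add_left_comm]

section Hamming
variable {α : Type*} [DecidableEq α]

lemma dH_cons (x y : α) (u v : List α) :
    dH (x :: u) (y :: v) = (if x = y then 0 else 1) + dH u v := by
  by_cases h : x = y <;> simp [dH, h, add_comm]

lemma dH_comm (u v : List α) : dH u v = dH v u := by
  rw [dH, dH, ← zip_swap, countP_map]
  exact countP_congr fun p _ => by simp [ne_comm]

lemma dH_append_left (u v w : List α) : dH (u ++ v) (u ++ w) = dH v w := by
  induction u with
  | nil => rfl
  | cons x u ih => rw [cons_append, cons_append, dH_cons, if_pos rfl, ih, zero_add]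

lemma dH_self (u : List α) : dH u u = 0 := by
  induction u with
  | nil => rfl
  | cons x u ih => rw [dH_cons, if_pos rfl, ih]

end Hamming

lemma B_add_one_add (m n : ℕ) : B (m + 1 + n) = B m ++ [b] ++ B n := by
  simp [replicate_add]

lemma dH_acacWord_shift_of_le (α β δ ν s g : ℕ) :
    dH (acacWord α (β + 2 * (s + 1)) (s + 1 + g) δ (ν + (s + 1)))
      (acacWord (α + (s + 1)) β (s + 1 + g) (δ + 2 * (s + 1)) ν) = 8 := by
  unfold acacWord
  -- cut each run of `b`s wherever the other word has a letter, so the words align piece by piece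
  rw [show β + 2 * (s + 1) = s + 1 + (β + 1 + s) by ring, show ν + (s + 1) = s + 1 + ν by ring,
    show α + (s + 1) = α + 1 + s by ring, show δ + 2 * (s + 1) = s + 1 + (δ + 1 + s) by ring]
  nth_rewrite 1 [show s + 1 + g = g + 1 + s by ring]
  simp only [B_add_one_add, append_assoc, cons_append, dH_append_left, dH_cons, dH_self]
  decide

lemma dH_acacWord_shift_of_eq (α β γ δ ν : ℕ) :
    dH (acacWord α (β + 2 * (γ + 1)) γ δ (ν + (γ + 1)))
      (acacWord (α + (γ + 1)) β γ (δ + 2 * (γ + 1)) ν) = 7 := by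
  unfold acacWord
  rw [show β + 2 * (γ + 1) = γ + 1 + (β + 1 + γ) by ring, show ν + (γ + 1) = γ + 1 + ν by ring,
    show α + (γ + 1) = α + 1 + γ by ring, show δ + 2 * (γ + 1) = γ + 1 + (δ + 1 + γ) by ring]
  simp only [B_add_one_add, append_assoc, cons_append, dH_append_left, dH_cons, dH_self]
  decide

lemma dH_acacWord_shift_of_gt (α β γ δ ν r : ℕ) :
    dH (acacWord α (β + 2 * (γ + 2 + r)) γ δ (ν + (γ + 2 + r)))
      (acacWord (α + (γ + 2 + r)) β γ (δ + 2 * (γ + 2 + r)) ν) = 8 := by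
  unfold acacWord
  rw [show β + 2 * (γ + 2 + r) = γ + 1 + r + 1 + (β + 1 + (γ + 1 + r)) by ring,
    show ν + (γ + 2 + r) = γ + 1 + r + 1 + ν by ring,
    show α + (γ + 2 + r) = α + 1 + (γ + 1 + r) by ring,
    show δ + 2 * (γ + 2 + r) = r + 1 + (γ + 1 + (δ + 1 + (γ + 1 + r))) by ring]
  simp only [B_add_one_add, append_assoc, cons_append, dH_append_left, dH_cons, dH_self]
  decide

lemma dH_acacWord_shift (α β γ δ ν t : ℕ) (ht : 0 < t) :
    dH (acacWord α (β + 2 * t) γ δ (ν + t)) (acacWord (α + t) β γ (δ + 2 * t) ν) =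
      if t = γ + 1 then 7 else 8 := by
  rcases lt_trichotomy t (γ + 1) with h | rfl | h
  · obtain ⟨s, rfl⟩ := Nat.exists_eq_add_of_lt ht
    obtain ⟨g, rfl⟩ := Nat.exists_eq_add_of_le (Nat.le_of_lt_succ h)
    rw [if_neg h.ne, zero_add, dH_acacWord_shift_of_le]
  · rw [if_pos rfl, dH_acacWord_shift_of_eq]
  · obtain ⟨r, rfl⟩ : ∃ r, t = γ + 2 + r := ⟨t - (γ + 2), by omega⟩
    rw [if_neg h.ne', dH_acacWord_shift_of_gt]

lemma MEq3.symm {w w' : List ABC} (h : MEq3 w w') : MEq3 w' w := by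
  obtain ⟨h₁, h₂, h₃, h₄, h₅, h₆⟩ := h
  exact ⟨h₁.symm, h₂.symm, h₃.symm, h₄.symm, h₅.symm, h₆.symm⟩

lemma acacWord_params_of_MEq3 {α β γ δ ν α' β' γ' δ' ν' : ℕ}
    (h : MEq3 (acacWord α β γ δ ν) (acacWord α' β' γ' δ' ν')) :
    γ = γ' ∧ α + ν = α' + ν' ∧ 2 * α + β = 2 * α' + β' ∧ 2 * α' + δ = 2 * α + δ' := by
  obtain ⟨-, hb, -, hab, hbc, habc⟩ := h
  obtain ⟨hb₁, hab₁, hbc₁, habc₁⟩ := scount_acacWord α β γ δ ν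
  obtain ⟨hb₂, hab₂, hbc₂, habc₂⟩ := scount_acacWord α' β' γ' δ' ν'
  omega

lemma dH_acacWord_of_MEq3_of_lt {α β γ δ ν α' β' γ' δ' ν' : ℕ}
    (h : MEq3 (acacWord α β γ δ ν) (acacWord α' β' γ' δ' ν')) (hα : α < α') :
    dH (acacWord α β γ δ ν) (acacWord α' β' γ' δ' ν') = 7 ∨
      dH (acacWord α β γ δ ν) (acacWord α' β' γ' δ' ν') = 8 := by
  obtain ⟨rfl, hν, hβ, hδ⟩ := acacWord_params_of_MEq3 h
  obtain ⟨t, ht, rfl⟩ : ∃ t, 0 < t ∧ α' = α + t := ⟨α' - α, by omega, by omega⟩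
  obtain rfl : β = β' + 2 * t := by omega
  obtain rfl : δ' = δ + 2 * t := by omega
  obtain rfl : ν = ν' + t := by omega
  rw [dH_acacWord_shift _ _ _ _ _ _ ht]
  split_ifs <;> simp

theorem stmt_16_general (α β γ δ ν α' β' γ' δ' ν' : ℕ)
    (hne : (B α ++ [a] ++ B β ++ [c] ++ B γ ++ [a] ++ B δ ++ [c] ++ B ν) ≠
      (B α' ++ [a] ++ B β' ++ [c] ++ B γ' ++ [a] ++ B δ' ++ [c] ++ B ν'))
    (hM : MEq3 (B α ++ [a] ++ B β ++ [c] ++ B γ ++ [a] ++ B δ ++ [c] ++ B ν)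
      (B α' ++ [a] ++ B β' ++ [c] ++ B γ' ++ [a] ++ B δ' ++ [c] ++ B ν')) :
    γ = γ' ∧ α + ν = α' + ν' ∧
      (β' : ℤ) - (β : ℤ) = (δ : ℤ) - (δ' : ℤ) ∧
      (α' : ℤ) - (α : ℤ) = (ν : ℤ) - (ν' : ℤ) ∧
      (dH (B α ++ [a] ++ B β ++ [c] ++ B γ ++ [a] ++ B δ ++ [c] ++ B ν)
          (B α' ++ [a] ++ B β' ++ [c] ++ B γ' ++ [a] ++ B δ' ++ [c] ++ B ν') = 7 ∨
       dH (B α ++ [a] ++ B β ++ [c] ++ B γ ++ [a] ++ B δ ++ [c] ++ B ν)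
          (B α' ++ [a] ++ B β' ++ [c] ++ B γ' ++ [a] ++ B δ' ++ [c] ++ B ν') = 8) := by
  obtain ⟨hγ, hν, hβ, hδ⟩ := acacWord_params_of_MEq3 hM
  refine ⟨hγ, hν, by omega, by omega, ?_⟩
  rcases lt_trichotomy α α' with hα | rfl | hα
  · exact dH_acacWord_of_MEq3_of_lt hM hα
  · obtain ⟨rfl, rfl, rfl, rfl⟩ : β = β' ∧ γ = γ' ∧ δ = δ' ∧ ν = ν' := by omega
    exact absurd rfl hne
  · rw [dH_comm]
    exact dH_acacWord_of_MEq3_of_lt hM.symm hα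

theorem stmt_16 (α β γ δ ν α' β' γ' δ' ν' : ℕ)
    (hβ : 1 ≤ β) (hγ : 1 ≤ γ) (hδ : 1 ≤ δ)
    (hβ' : 1 ≤ β') (hγ' : 1 ≤ γ') (hδ' : 1 ≤ δ')
    (hne : (B α ++ [a] ++ B β ++ [c] ++ B γ ++ [a] ++ B δ ++ [c] ++ B ν) ≠
      (B α' ++ [a] ++ B β' ++ [c] ++ B γ' ++ [a] ++ B δ' ++ [c] ++ B ν'))
    (hM : MEq3 (B α ++ [a] ++ B β ++ [c] ++ B γ ++ [a] ++ B δ ++ [c] ++ B ν)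
      (B α' ++ [a] ++ B β' ++ [c] ++ B γ' ++ [a] ++ B δ' ++ [c] ++ B ν')) :
    γ = γ' ∧ α + ν = α' + ν' ∧
      (β' : ℤ) - (β : ℤ) = (δ : ℤ) - (δ' : ℤ) ∧
      (α' : ℤ) - (α : ℤ) = (ν : ℤ) - (ν' : ℤ) ∧
      (dH (B α ++ [a] ++ B β ++ [c] ++ B γ ++ [a] ++ B δ ++ [c] ++ B ν)
          (B α' ++ [a] ++ B β' ++ [c] ++ B γ' ++ [a] ++ B δ' ++ [c] ++ B ν') = 7 ∨
       dH (B α ++ [a] ++ B β ++ [c] ++ B γ ++ [a] ++ B δ ++ [c] ++ B ν)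
          (B α' ++ [a] ++ B β' ++ [c] ++ B γ' ++ [a] ++ B δ' ++ [c] ++ B ν') = 8) :=
  stmt_16_general α β γ δ ν α' β' γ' δ' ν' hne hM
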